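/- Let a, b be parameters with 1−2b not zero or a negative integer. Define c₀ = 1, c₁ = −2(a−2b)/(1−2b), and for n ≥ 2, cₙ = [ (n+2(a−2b−1))(n+2(a−b−1)) c_{n−2} − 2(n+a−2b−1) c_{n−1} ] / (n(n−2b)). Then for all n ≥ 0, c_{2n} = (a−2b)_n (a−b+1/2)_n / (n! (1/2−b)_n) and c_{2n+1} = c₁ · (a−2b+1)_n (a−b+1/2)_n / (n! (3/2−b)_n). -/
import Mathlib


open scoped Nat

/-- Pochhammer symbol (rising factorial). -/
noncomputable def poch (a : ℝ) (n : ℕ) : ℝ := (ascPochhammer ℝ n).eval a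

/-- Gauss hypergeometric series ₂F₁(a,b;c;z). -/
noncomputable def F (a b c z : ℝ) : ℝ :=
  ∑' n : ℕ, poch a n * poch b n / (poch c n * (n ! : ℝ)) * z ^ n

lemma poch_zero (x : ℝ) : poch x 0 = 1 := by simp [poch]

lemma poch_succ (x : ℝ) (m : ℕ) : poch x (m+1) = poch x m * (x + m) := by
  simp [poch, ascPochhammer_succ_right]

lemma poch_succ' (x : ℝ) (m : ℕ) : poch x (m+1) = x * poch (x+1) m := by
  simp [poch, ascPochhammer_succ_left]

set_option maxHeartbeats 1000000 in
theorem frobenius_coeffs_lambda_neg_2b (a b : ℝ) (hb : ∀ k : ℕ, 1 - 2 * b + (k : ℝ) ≠ 0)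
    (c : ℕ → ℝ) (hc0 : c 0 = 1) (hc1 : c 1 = -2 * (a - 2 * b) / (1 - 2 * b))
    (hrec : ∀ n : ℕ, 2 ≤ n → c n =
      (((n : ℝ) + 2 * (a - 2 * b - 1)) * ((n : ℝ) + 2 * (a - b - 1)) * c (n - 2)
        - 2 * ((n : ℝ) + a - 2 * b - 1) * c (n - 1)) / ((n : ℝ) * ((n : ℝ) - 2 * b))) :
    ∀ n : ℕ,
      c (2 * n) = poch (a - 2 * b) n * poch (a - b + 1/2) n / ((n ! : ℝ) * poch (1/2 - b) n) ∧
      c (2 * n + 1) =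
        c 1 * (poch (a - 2 * b + 1) n * poch (a - b + 1/2) n / ((n ! : ℝ) * poch (3/2 - b) n)) := by
  have hb0 : (1 : ℝ) - 2*b ≠ 0 := by simpa using hb 0
  have h1 : ∀ m : ℕ, (1/2 - b + (m : ℝ)) ≠ 0 := by
    intro m h
    exact hb (2*m) (by push_cast; linarith)
  have h2 : ∀ m : ℕ, (3/2 - b + (m : ℝ)) ≠ 0 := by
    intro m h
    exact hb (2*m+2) (by push_cast; linarith)
  have hR : ∀ m : ℕ, poch (1/2 - b) m ≠ 0 := by
    intro m
    induction m with
    | zero => simp [poch_zero]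
    | succ k ih => rw [poch_succ]; exact mul_ne_zero ih (h1 k)
  have hS : ∀ m : ℕ, poch (3/2 - b) m ≠ 0 := by
    intro m
    induction m with
    | zero => simp [poch_zero]
    | succ k ih => rw [poch_succ]; exact mul_ne_zero ih (h2 k)
  have hfac : ∀ m : ℕ, ((m ! : ℝ)) ≠ 0 := fun m => Nat.cast_ne_zero.2 m.factorial_ne_zero
  have hm1 : ∀ m : ℕ, ((m : ℝ) + 1) ≠ 0 := fun m => by positivity
  have hc1' : c 1 * (1 - 2*b) = -2 * (a - 2*b) := by
    rw [hc1, div_mul_cancel₀ _ hb0]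
  intro n
  induction n with
  | zero =>
    refine ⟨by simpa [poch_zero] using hc0, by simp [poch_zero]⟩
  | succ m ih =>
    obtain ⟨ihE, ihO⟩ := ih
    rw [eq_div_iff (mul_ne_zero (hfac m) (hR m))] at ihE
    rw [← mul_div_assoc, eq_div_iff (mul_ne_zero (hfac m) (hS m))] at ihO
    have rel1 : poch (a - 2*b) m * (a - 2*b + (m : ℝ)) = (a - 2*b) * poch (a - 2*b + 1) m := by
      rw [← poch_succ, poch_succ']
    have rel2 : poch (1/2 - b) m * (1/2 - b + (m : ℝ)) = (1/2 - b) * poch (3/2 - b) m := by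
      have h := poch_succ' (1/2 - b) m
      have h32 : (1:ℝ)/2 - b + 1 = 3/2 - b := by ring
      rw [h32] at h
      rw [← poch_succ, h]
    have hA : (2*(m:ℝ) + 2) ≠ 0 := by positivity
    have hB : (2*(m:ℝ) + 2 - 2*b) ≠ 0 := fun h => hb (2*m+1) (by push_cast; linarith)
    have hW : ((m:ℝ) + 1 - b) ≠ 0 := fun h => hB (by linarith)
    have hrec2 := hrec (2*m+2) (by omega)
    have e2 : 2*m + 2 - 2 = 2*m := by omega
    have e1 : 2*m + 2 - 1 = 2*m + 1 := by omega
    rw [e2, e1] at hrec2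
    push_cast at hrec2
    rw [eq_div_iff (mul_ne_zero hA hB)] at hrec2
    have hl2 : (((m:ℝ)+1) * ((m:ℝ)+1-b) * (1-2*b)) ≠ 0 :=
      mul_ne_zero (mul_ne_zero (hm1 m) hW) hb0
    have hEvenC : c (2*m+2) * ((((m:ℝ)+1) * (m ! : ℝ)) * (poch (1/2 - b) m * (1/2 - b + (m:ℝ))))
        = (poch (a - 2*b) m * (a - 2*b + (m:ℝ))) *
          (poch (a - b + 1/2) m * (a - b + 1/2 + (m:ℝ))) := by
      refine mul_left_cancel₀ hl2 ?_
      linear_combination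
        ((((m:ℝ)+1) * (m ! : ℝ) * poch (1/2 - b) m * (1/2 - b + (m:ℝ)) * (1-2*b)) / 4) * hrec2
        + (((1-2*b) * ((2*(m:ℝ)+2+2*(a-2*b-1))*(2*(m:ℝ)+2+2*(a-b-1))) * (1/2 - b + (m:ℝ))
            * ((m:ℝ)+1)) / 4) * ihE
        - (((1-2*b) * (2*(2*(m:ℝ)+2+a-2*b-1)) * ((m:ℝ)+1) * poch (a - b + 1/2) m
            * poch (a - 2*b + 1) m) / 8) * hc1'
        - (((1-2*b) * (2*(2*(m:ℝ)+2+a-2*b-1)) * ((m:ℝ)+1) * poch (a - b + 1/2) m) / 4) * rel1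
        - (((1-2*b) * (1-2*b) * (2*(2*(m:ℝ)+2+a-2*b-1)) * ((m:ℝ)+1)) / 8) * ihO
        - (((1-2*b) * (2*(2*(m:ℝ)+2+a-2*b-1)) * ((m:ℝ)+1) * c (2*m+1) * (m ! : ℝ)) / 4) * rel2
    have hEven : c (2*(m+1)) = poch (a - 2*b) (m+1) * poch (a - b + 1/2) (m+1) /
        (((m+1)! : ℝ) * poch (1/2 - b) (m+1)) := by
      rw [show 2*(m+1) = 2*m+2 from by ring,
        eq_div_iff (mul_ne_zero (hfac (m+1)) (hR (m+1))),
        poch_succ, poch_succ, poch_succ, Nat.factorial_succ]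
      push_cast
      linear_combination hEvenC
    refine ⟨hEven, ?_⟩
    have hC : (2*(m:ℝ) + 3) ≠ 0 := by positivity
    have hD : (2*(m:ℝ) + 3 - 2*b) ≠ 0 := fun h => hb (2*m+2) (by push_cast; linarith)
    have hrec3 := hrec (2*m+3) (by omega)
    have e2' : 2*m + 3 - 2 = 2*m + 1 := by omega
    have e1' : 2*m + 3 - 1 = 2*m + 2 := by omega
    rw [e2', e1'] at hrec3
    push_cast at hrec3
    rw [eq_div_iff (mul_ne_zero hC hD)] at hrec3
    have hl3 : ((2*(m:ℝ)+3) * ((m:ℝ)+1) * (1-2*b) * (1/2 - b + (m:ℝ))) ≠ 0 :=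
      mul_ne_zero (mul_ne_zero (mul_ne_zero hC (hm1 m)) hb0) (h1 m)
    have hOddC : c (2*m+3) * ((((m:ℝ)+1) * (m ! : ℝ)) * (poch (3/2 - b) m * (3/2 - b + (m:ℝ))))
        = c 1 * ((poch (a - 2*b + 1) m * (a - 2*b + 1 + (m:ℝ))) *
            (poch (a - b + 1/2) m * (a - b + 1/2 + (m:ℝ)))) := by
      refine mul_left_cancel₀ hl3 ?_
      linear_combination
        (((1-2*b) * (1/2 - b + (m:ℝ)) / 2) * (((m:ℝ)+1)^2) * (m ! : ℝ) * poch (3/2 - b) m) * hrec3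
        + (((1-2*b) * (1/2 - b + (m:ℝ)) / 2) * (((m:ℝ)+1)^2)
            * ((2*(m:ℝ)+3+2*(a-2*b-1))*(2*(m:ℝ)+3+2*(a-b-1)))) * ihO
        + (((1/2 - b + (m:ℝ)) / 2) * (((m:ℝ)+1)^2)
            * ((2*(m:ℝ)+3+2*(a-2*b-1))*(2*(m:ℝ)+3+2*(a-b-1))) * poch (a - b + 1/2) m
            * poch (a - 2*b + 1) m) * hc1'
        + ((1/2 - b + (m:ℝ)) * (((m:ℝ)+1)^2)
            * ((2*(m:ℝ)+3+2*(a-2*b-1))*(2*(m:ℝ)+3+2*(a-b-1))) * poch (a - b + 1/2) m) * rel1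
        - (((m:ℝ)+1) * (2*(2*(m:ℝ)+3+a-2*b-1)) * (1/2 - b + (m:ℝ))) * hEvenC
        + ((((m:ℝ)+1)^2) * (2*(2*(m:ℝ)+3+a-2*b-1)) * c (2*m+2) * (m ! : ℝ)
            * (1/2 - b + (m:ℝ))) * rel2
        - ((2*(m:ℝ)+3) * ((m:ℝ)+1) * (1/2 - b + (m:ℝ)) * (a - 2*b + 1 + (m:ℝ))
            * poch (a - b + 1/2) m * (a - b + 1/2 + (m:ℝ)) * poch (a - 2*b + 1) m) * hc1'
        - (2 * (2*(m:ℝ)+3) * ((m:ℝ)+1) * (1/2 - b + (m:ℝ)) * (a - 2*b + 1 + (m:ℝ))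
            * poch (a - b + 1/2) m * (a - b + 1/2 + (m:ℝ))) * rel1
    rw [show 2*(m+1)+1 = 2*m+3 from by ring, ← mul_div_assoc,
      eq_div_iff (mul_ne_zero (hfac (m+1)) (hS (m+1))),
      poch_succ, poch_succ, poch_succ, Nat.factorial_succ]
    push_cast
    linear_combination hOddC
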